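/- For each fixed $r_2 \geq 0$, there exists a unique $r_3 > r_2$ with $p(r_2, r_3) = 0$, where $p$ is Euler's quintic $p(r_2,r_3) = -r_2^5 + 2r_2^4 r_3 - 2r_2^4 - r_2^3 r_3^2 + 4r_2^3 r_3 - r_2^3 + r_2^2 r_3^3 - r_2^2 r_3^2 + r_2^2 r_3 - r_2^2 - 2r_2 r_3^4 - 4r_2 r_3^3 - 5r_2 r_3^2 - 4r_2 r_3 - 2r_2 + r_3^5 + 2r_3^4 + r_3^3 - r_3^2 - 2r_3 - 1$. -/

import Mathlib

/-!
Put `r₃ = r₂ + a`. Then `p(r₂, r₂ + a) = a⁵ + b₄a⁴ + b₃a³ + b₂a² + b₁a + b₀` with `b₄, b₃ ≥ 0` and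
`b₁, b₀ < 0`, so on `a > 0` the quotient `p / a²` is a strictly increasing function
`a³ + b₄a² + b₃a + b₂ + b₁/a + b₀/a²` and vanishes at most once. A root exists by the intermediate
value theorem, since `p(r₂, r₂) = -(r₂ + 1)⁴ < 0` while `p(r₂, 3r₂ + 2)` has positive coefficients.
-/

/-- Euler's quintic. -/
def eulerP (r2 r3 : ℝ) : ℝ :=
  -r2^5 + 2*r2^4*r3 - 2*r2^4 - r2^3*r3^2 + 4*r2^3*r3 - r2^3 + r2^2*r3^3 - r2^2*r3^2
    + r2^2*r3 - r2^2 - 2*r2*r3^4 - 4*r2*r3^3 - 5*r2*r3^2 - 4*r2*r3 - 2*r2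
    + r3^5 + 2*r3^4 + r3^3 - r3^2 - 2*r3 - 1

open Set

theorem strictMonoOn_quintic_div_sq {b4 b3 b2 b1 b0 : ℝ} (h4 : 0 ≤ b4) (h3 : 0 ≤ b3)
    (h1 : b1 ≤ 0) (h0 : b0 ≤ 0) :
    StrictMonoOn (fun a : ℝ ↦ (a^5 + b4*a^4 + b3*a^3 + b2*a^2 + b1*a + b0) / a^2) (Ioi 0) := by
  intro x (hx : 0 < x) y (hy : 0 < y) hxy
  have hyx : 0 < y - x := sub_pos.2 hxy
  rw [div_lt_div_iff₀ (by positivity) (by positivity)]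
  have cube : 0 < x^2 * y^2 * (y^3 - x^3) := by
    have : 0 < y^3 - x^3 := sub_pos.2 (pow_lt_pow_left₀ hxy hx.le three_ne_zero)
    positivity
  have : 0 ≤ b4 * (x^2 * y^2 * (y - x) * (y + x)) + b3 * (x^2 * y^2 * (y - x))
      + (-b1) * (x * y * (y - x)) + (-b0) * ((y - x) * (y + x)) := by
    have := neg_nonneg.2 h1
    have := neg_nonneg.2 h0
    positivity
  linear_combination cube + this

theorem eulerP_add (r2 a : ℝ) :
    eulerP r2 (r2 + a) = a^5 + (3*r2 + 2)*a^4 + (3*r2 + 1)*(r2 + 1)*a^3 - (r2 + 1)^2*a^2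
      - 2*(r2 + 1)^3*a - (r2 + 1)^4 := by
  unfold eulerP; ring

theorem eulerP_self (r2 : ℝ) : eulerP r2 r2 = -(r2 + 1)^4 := by
  unfold eulerP; ring

theorem eulerP_three_mul_add_two_pos {r2 : ℝ} (h : 0 ≤ r2) : 0 < eulerP r2 (3*r2 + 2) := by
  have : eulerP r2 (3*r2 + 2) = 104*r2^5 + 479*r2^4 + 876*r2^3 + 794*r2^2 + 356*r2 + 63 := by
    unfold eulerP; ring
  rw [this]; positivity

theorem strictMonoOn_eulerP_div_sq {r2 : ℝ} (h : 0 ≤ 3*r2 + 1) :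
    StrictMonoOn (fun r3 ↦ eulerP r2 r3 / (r3 - r2)^2) (Ioi r2) := by
  intro x (hx : r2 < x) y (hy : r2 < y) hxy
  have hr : 0 ≤ r2 + 1 := by linarith
  have := strictMonoOn_quintic_div_sq (b4 := 3*r2 + 2) (b3 := (3*r2 + 1)*(r2 + 1))
    (b2 := -(r2 + 1)^2) (b1 := -(2*(r2 + 1)^3)) (b0 := -(r2 + 1)^4) (by linarith)
    (by positivity) (neg_nonpos.2 (by positivity)) (neg_nonpos.2 (by positivity))
    (sub_pos.2 hx) (sub_pos.2 hy) (sub_lt_sub_right hxy r2)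
  simp only [neg_mul, ← sub_eq_add_neg, ← eulerP_add, add_sub_cancel] at this
  exact this

theorem euler_quintic_unique_root (r2 : ℝ) (h2 : 0 ≤ r2) :
    ∃! r3 : ℝ, r2 < r3 ∧ eulerP r2 r3 = 0 := by
  have hcont : ContinuousOn (eulerP r2) (Icc r2 (3*r2 + 2)) := by
    unfold eulerP; fun_prop
  have hr : 0 < r2 + 1 := by linarith
  have hsign : (0 : ℝ) ∈ Ioo (eulerP r2 r2) (eulerP r2 (3*r2 + 2)) :=
    ⟨by rw [eulerP_self]; exact neg_neg_of_pos (by positivity), eulerP_three_mul_add_two_pos h2⟩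
  obtain ⟨r3, ⟨hr3, -⟩, hroot⟩ := intermediate_value_Ioo (by linarith) hcont hsign
  refine ⟨r3, ⟨hr3, hroot⟩, fun y ⟨hy, hyroot⟩ ↦ ?_⟩
  exact (strictMonoOn_eulerP_div_sq (by linarith)).injOn hy hr3 (by simp only [hyroot, hroot, zero_div])
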